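/- Let κ > 1 and let 1 < q < p be real numbers. Then ‖A_κ(ω(z))‖_q / ‖ω(z)‖_p → +∞ as z → 1⁻. In particular the ℓ^p → ℓ^q norm of the discrete quantum-limited amplifier A_κ is infinite and is asymptotically achieved by geometric distributions with ratio tending to 1. -/

import Mathlib

/-- The ℓ^p norm of a sequence of complex numbers. -/
noncomputable def lpNorm (p : ℝ) (x : ℕ → ℂ) : ℝ :=
  (∑' n : ℕ, ‖x n‖ ^ p) ^ (1 / p)

/-- The discrete quantum-limited amplifier with parameter `κ`:
`[A_κ(x)]_k = ∑_{n=0}^k C(k,n) (κ-1)^{k-n} κ^{-(k+1)} x_n`. -/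
noncomputable def amp (κ : ℝ) (x : ℕ → ℂ) : ℕ → ℂ :=
  fun k => ∑ n ∈ Finset.range (k + 1),
    (Nat.choose k n : ℂ) * ((κ - 1 : ℝ) : ℂ) ^ (k - n) * ((κ : ℝ) : ℂ)⁻¹ ^ (k + 1) * x n

/-- The geometric probability distribution on ℕ with ratio `z`, as a complex sequence. -/
noncomputable def geom (z : ℝ) : ℕ → ℂ := fun n => (((1 - z) * z ^ n : ℝ) : ℂ)

/-! The amplifier maps the geometric distribution `ω(z)` to the geometric distribution `ω(w)` with
`1 - w = (1 - z) / κ`. Since `z ^ r ≤ z` and, by Bernoulli, `1 - z ^ r ≤ r (1 - z)` for `r ≥ 1`,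
the closed form `‖ω(z)‖_r = (1 - z) / (1 - z ^ r) ^ (1 / r)` is comparable to `(1 - z) ^ (1 - 1 / r)`.
Hence the ratio is at least a constant times `(1 - z) ^ (1 / p - 1 / q)`, which blows up as
`z → 1⁻` because `q < p`. -/

open Filter Topology

lemma lpNorm_nonneg (p : ℝ) (x : ℕ → ℂ) : 0 ≤ lpNorm p x :=
  Real.rpow_nonneg (tsum_nonneg fun _ => by positivity) _

lemma amp_geom {κ : ℝ} (hκ : κ ≠ 0) (z : ℝ) : amp κ (geom z) = geom ((κ - 1 + z) / κ) := by
  ext k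
  have hterm : ∀ n ∈ Finset.range (k + 1),
      (k.choose n : ℂ) * ((κ - 1 : ℝ) : ℂ) ^ (k - n) * ((κ : ℝ) : ℂ)⁻¹ ^ (k + 1) * geom z n =
        (κ : ℂ)⁻¹ ^ (k + 1) * (1 - z) * ((z : ℂ) ^ n * (κ - 1) ^ (k - n) * k.choose n) := by
    intro n _
    simp only [geom]
    push_cast
    ring
  have hκ' : (κ : ℂ) ≠ 0 := by exact_mod_cast hκ
  rw [amp, Finset.sum_congr rfl hterm, ← Finset.mul_sum, ← add_pow, geom]
  push_cast
  simp only [div_pow, inv_pow]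
  field_simp
  ring

lemma lpNorm_geom {r z : ℝ} (hr : 0 < r) (hz0 : 0 ≤ z) (hz1 : z < 1) :
    lpNorm r (geom z) = (1 - z) / (1 - z ^ r) ^ (1 / r) := by
  have hterm : ∀ n : ℕ, ‖geom z n‖ ^ r = (1 - z) ^ r * (z ^ r) ^ n := by
    intro n
    rw [geom, Complex.norm_real, Real.norm_of_nonneg (by bound),
      Real.mul_rpow (by linarith) (by positivity), ← Real.rpow_natCast, ← Real.rpow_natCast,
      ← Real.rpow_mul hz0, ← Real.rpow_mul hz0, mul_comm (n : ℝ) r]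
  have hzr : z ^ r < 1 := Real.rpow_lt_one hz0 hz1 hr
  rw [lpNorm, tsum_congr hterm, tsum_mul_left, tsum_geometric_of_lt_one (by positivity) hzr,
    ← div_eq_mul_inv, Real.div_rpow (by positivity) (by linarith), ← Real.rpow_mul (by linarith),
    mul_one_div_cancel hr.ne', Real.rpow_one]

lemma lpNorm_geom_le {r z : ℝ} (hr : 1 ≤ r) (hz0 : 0 ≤ z) (hz1 : z < 1) :
    lpNorm r (geom z) ≤ (1 - z) ^ (1 - 1 / r) := by
  have hz : 0 < 1 - z := by linarith
  have hzr : 1 - z ≤ 1 - z ^ r := by linarith [Real.rpow_le_self_of_le_one hz0 hz1.le hr]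
  rw [lpNorm_geom (by linarith) hz0 hz1, Real.rpow_sub hz, Real.rpow_one]
  gcongr

lemma le_lpNorm_geom {r z : ℝ} (hr : 1 ≤ r) (hz0 : 0 ≤ z) (hz1 : z < 1) :
    r ^ (-(1 / r)) * (1 - z) ^ (1 - 1 / r) ≤ lpNorm r (geom z) := by
  have hz : 0 < 1 - z := by linarith
  have hr0 : 0 < r := by linarith
  have hbernoulli : 1 - z ^ r ≤ r * (1 - z) := by
    have h := one_add_mul_self_le_rpow_one_add (s := z - 1) (by linarith) hr
    rw [add_sub_cancel] at h
    linarith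
  have hpos : 0 < 1 - z ^ r := sub_pos.2 (Real.rpow_lt_one hz0 hz1 hr0)
  calc r ^ (-(1 / r)) * (1 - z) ^ (1 - 1 / r) = (1 - z) / (r * (1 - z)) ^ (1 / r) := by
        rw [Real.rpow_neg hr0.le, Real.rpow_sub hz, Real.rpow_one, Real.mul_rpow hr0.le hz.le]
        field_simp
    _ ≤ (1 - z) / (1 - z ^ r) ^ (1 / r) := by gcongr
    _ = lpNorm r (geom z) := (lpNorm_geom hr0 hz0 hz1).symm

lemma le_lpNorm_amp_geom_div_lpNorm_geom {κ p q z : ℝ} (hκ : 1 < κ) (hq : 1 ≤ q) (hp : 1 ≤ p)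
    (hz0 : 0 ≤ z) (hz1 : z < 1) :
    q ^ (-(1 / q)) * κ ^ (-(1 - 1 / q)) * (1 - z) ^ (1 / p - 1 / q) ≤
      lpNorm q (amp κ (geom z)) / lpNorm p (geom z) := by
  have hκ0 : 0 < κ := by linarith
  have hz : 0 < 1 - z := by linarith
  set w := (κ - 1 + z) / κ with hw
  have hw0 : 0 ≤ w := div_nonneg (by linarith) hκ0.le
  have hw1 : w < 1 := by rw [hw, div_lt_one hκ0]; linarith
  have h1w : 1 - w = (1 - z) / κ := by rw [hw]; field_simp; ring
  have hexp : (1 - z) ^ (1 / p - 1 / q) = (1 - z) ^ (1 - 1 / q) / (1 - z) ^ (1 - 1 / p) := by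
    rw [← Real.rpow_sub hz]; ring_nf
  calc q ^ (-(1 / q)) * κ ^ (-(1 - 1 / q)) * (1 - z) ^ (1 / p - 1 / q)
      = q ^ (-(1 / q)) * (1 - w) ^ (1 - 1 / q) / (1 - z) ^ (1 - 1 / p) := by
        rw [hexp, h1w, Real.div_rpow hz.le hκ0.le, Real.rpow_neg hκ0.le]
        ring
    _ ≤ lpNorm q (geom w) / lpNorm p (geom z) :=
        div_le_div₀ (lpNorm_nonneg q _) (le_lpNorm_geom hq hw0 hw1)
          ((mul_pos (by positivity) (Real.rpow_pos_of_pos hz _)).trans_le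
            (le_lpNorm_geom hp hz0 hz1))
          (lpNorm_geom_le hp hz0 hz1)
    _ = lpNorm q (amp κ (geom z)) / lpNorm p (geom z) := by rw [amp_geom hκ0.ne']

lemma tendsto_one_sub_nhdsLT_one : Tendsto (fun z : ℝ => 1 - z) (𝓝[<] 1) (𝓝[>] 0) := by
  have h := ((continuous_sub_left (1 : ℝ)).continuousWithinAt (s := Set.Iio 1) (x := 1)
    ).tendsto_nhdsWithin (t := Set.Ioi 0) fun _ hz => sub_pos.2 hz
  rwa [sub_self] at h

theorem amplifier_pq_norm_infinite (κ p q : ℝ) (hκ : 1 < κ) (hq : 1 < q) (hqp : q < p) :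
    Filter.Tendsto (fun z => lpNorm q (amp κ (geom z)) / lpNorm p (geom z))
      (nhdsWithin 1 (Set.Iio 1)) Filter.atTop := by
  have hexp : 1 / p - 1 / q < 0 := sub_neg.2 (one_div_lt_one_div_of_lt (by linarith) hqp)
  have hbound := ((tendsto_rpow_neg_nhdsGT_zero hexp).comp tendsto_one_sub_nhdsLT_one
    ).const_mul_atTop (show 0 < q ^ (-(1 / q)) * κ ^ (-(1 - 1 / q)) by positivity)
  refine tendsto_atTop_mono' _ ?_ hbound
  filter_upwards [Ioo_mem_nhdsLT zero_lt_one] with z hz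
  exact le_lpNorm_amp_geom_div_lpNorm_geom hκ hq.le (by linarith) hz.1.le hz.2
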